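/- For every positive integer n, r_{3,2}(n) = 0 if and only if n² + 1 is a prime number. -/

import Mathlib

/-!
Put `x = b - a` and `y = 2c + 1`: a splitting `n = a + b` with `ab = 2·P(3,c) = c(c+1)` is the
same as a representation `n² + 1 = x² + y²` with `x ≡ n (mod 2)` and `y ≠ ±1`. For odd `n ≥ 3`
the representation `1² + n²` qualifies while `n² + 1` is even. For even `n` we need a
representation other than `n² + 1²`. A prime has only one representation as a sum of two
squares. A composite `n² + 1 = uv` has the two obtained by composing `u = a² + b²` and
`v = c² + d²` (which exist since `-1` is a square modulo `u` and `v`) in the two possible ways;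
if both were trivial then `abcd(a² - b²)(c² - d²) = 0`, oddness rules out `a² = b²` and
`c² = d²`, and `ab = 0` (resp. `cd = 0`) makes `u` (resp. `v`) a divisor of `n`, absurd.
-/

/-- The `c`-th `m`-gonal number: `P(m,c) = c((m-2)c - (m-4))/2`. -/
def polygonal (m c : ℤ) : ℤ := c * ((m - 2) * c - (m - 4)) / 2

/-- `r_{m,t}(n)`: the number of unordered pairs `{a,b}` of positive integers with
`a + b = n` such that `ab = t·P(m,c)` for some `c`, where `c` ranges over positive
integers if `m = 3` or `m = 4`, and over all integers if `m > 4`. -/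
noncomputable def rmt (m t n : ℕ) : ℕ :=
  Set.ncard {p : ℕ × ℕ | 0 < p.1 ∧ p.1 ≤ p.2 ∧ p.1 + p.2 = n ∧
    ∃ c : ℤ, ((m = 3 ∨ m = 4) → 0 < c) ∧ (p.1 : ℤ) * p.2 = t * polygonal m c}

/-- `r'_{m,t}(n)`: the number of pairs `(x,y)` of nonnegative integers with
`2(m-2)n² + t(m-4)² = 2(m-2)x² + t y²`. -/
noncomputable def rmt' (m t n : ℕ) : ℕ :=
  Set.ncard {p : ℕ × ℕ |
    2 * ((m : ℤ) - 2) * (n : ℤ) ^ 2 + t * ((m : ℤ) - 4) ^ 2 =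
    2 * ((m : ℤ) - 2) * (p.1 : ℤ) ^ 2 + t * (p.2 : ℤ) ^ 2}

/-- `d_A(n)`: the number of positive divisors of `n` not divisible by any prime in `A`.
Equivalently, `∏_{p prime, p ∉ A} (1 + ord_p(n))`. -/
def dA (A : Finset ℕ) (n : ℕ) : ℕ :=
  (n.divisors.filter (fun d => ∀ p ∈ A, ¬ p ∣ d)).card

def HasPronicSplit (n : ℕ) : Prop :=
  ∃ a b : ℕ, 0 < a ∧ a ≤ b ∧ a + b = n ∧ ∃ c : ℤ, 0 < c ∧ (a : ℤ) * b = c * (c + 1)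

lemma two_mul_polygonal_three (c : ℤ) : 2 * polygonal 3 c = c * (c + 1) := by
  have hdiv : (2 : ℤ) ∣ c * (c + 1) := even_iff_two_dvd.mp (Int.even_mul_succ_self c)
  simp only [polygonal]
  norm_num
  exact Int.mul_ediv_cancel' hdiv

lemma rmt_three_two_eq_zero_iff (n : ℕ) : rmt 3 2 n = 0 ↔ ¬HasPronicSplit n := by
  rw [rmt, Set.ncard_eq_zero ((Set.finite_Iic (n, n)).subset ?bounded),
    Set.eq_empty_iff_forall_notMem, HasPronicSplit, ← not_exists]
  · push_cast
    simp only [two_mul_polygonal_three, Set.mem_ofPred_eq, true_or, forall_const, Prod.exists]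
  · exact fun p ⟨_, _, hsum, _⟩ => ⟨by omega, by omega⟩

lemma Int.eq_zero_or_eq_zero_of_sq_add_sq_eq_sq {p A B : ℤ} (hp : p ≠ 0) (hA : p ∣ A) (hB : p ∣ B)
    (h : A ^ 2 + B ^ 2 = p ^ 2) : A = 0 ∨ B = 0 := by
  obtain ⟨s, rfl⟩ := hA
  obtain ⟨t, rfl⟩ := hB
  have hst : s ^ 2 + t ^ 2 = 1 := by
    apply mul_left_cancel₀ (pow_ne_zero 2 hp)
    linear_combination h
  have : s = 0 ∨ t = 0 := by
    by_contra! hne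
    nlinarith [sq_pos_of_ne_zero hne.1, sq_pos_of_ne_zero hne.2]
  rcases this with rfl | rfl <;> simp

lemma Int.sq_eq_sq_or_sq_eq_sq_of_dvd_mul_add_mul {p : ℕ} (hp : p.Prime) {x y z w : ℤ}
    (hxy : x ^ 2 + y ^ 2 = p) (hzw : z ^ 2 + w ^ 2 = p) (hdvd : (p : ℤ) ∣ x * z + y * w) :
    x ^ 2 = z ^ 2 ∨ x ^ 2 = w ^ 2 := by
  have hp0 : (p : ℤ) ≠ 0 := by exact_mod_cast hp.ne_zero
  have hsum : (x * z + y * w) ^ 2 + (x * w - y * z) ^ 2 = (p : ℤ) ^ 2 := by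
    linear_combination (z ^ 2 + w ^ 2) * hxy + p * hzw
  have hdvd' : (p : ℤ) ∣ x * w - y * z := by
    obtain ⟨k, hk⟩ := hdvd
    have : (p : ℤ) ∣ (x * w - y * z) * (x * w - y * z) :=
      ⟨p - p * k ^ 2, by linear_combination hsum - (x * z + y * w + p * k) * hk⟩
    exact (Int.Prime.dvd_mul' hp this).elim id id
  rcases Int.eq_zero_or_eq_zero_of_sq_add_sq_eq_sq hp0 hdvd hdvd' hsum with h | h
  · right
    apply mul_left_cancel₀ hp0
    linear_combination -x ^ 2 * hzw + w ^ 2 * hxy + (x * z - y * w) * h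
  · left
    apply mul_left_cancel₀ hp0
    linear_combination -x ^ 2 * hzw + z ^ 2 * hxy + (x * w + y * z) * h

lemma Int.sq_eq_sq_or_sq_eq_sq_of_sq_add_sq_eq_prime {p : ℕ} (hp : p.Prime) {x y z w : ℤ}
    (hxy : x ^ 2 + y ^ 2 = p) (hzw : z ^ 2 + w ^ 2 = p) : x ^ 2 = z ^ 2 ∨ x ^ 2 = w ^ 2 := by
  have hdvd : (p : ℤ) ∣ (x * z + y * w) * (x * z + y * -w) :=
    ⟨x ^ 2 - w ^ 2, by linear_combination x ^ 2 * hzw - w ^ 2 * hxy⟩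
  rcases Int.Prime.dvd_mul' hp hdvd with h | h
  · exact Int.sq_eq_sq_or_sq_eq_sq_of_dvd_mul_add_mul hp hxy hzw h
  · simpa using Int.sq_eq_sq_or_sq_eq_sq_of_dvd_mul_add_mul hp hxy (by simpa using hzw) h

lemma mul_sq_eq_of_sq_add_sq_eq_prime {n : ℕ} (hp : (n ^ 2 + 1).Prime) {x y : ℤ}
    (hxy : x ^ 2 + y ^ 2 = n ^ 2 + 1) : (x * y) ^ 2 = n ^ 2 := by
  rcases Int.sq_eq_sq_or_sq_eq_sq_of_sq_add_sq_eq_prime hp (z := n) (w := 1)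
    (by push_cast; exact hxy) (by push_cast; ring) with h | h
  · linear_combination (y ^ 2 - n ^ 2) * h + n ^ 2 * hxy
  · linear_combination (y ^ 2 - 1) * h + hxy

lemma exists_sq_add_sq_of_dvd_sq_add_one {n u : ℕ} (hu : u ∣ n ^ 2 + 1) :
    ∃ a b : ℤ, (u : ℤ) = a ^ 2 + b ^ 2 := by
  have hN : IsSquare (-1 : ZMod (n ^ 2 + 1)) :=
    ZMod.isSquare_neg_one_of_eq_sq_add_sq_of_coprime (x := n) (y := 1) (by ring)
      (Nat.coprime_one_right n)
  obtain ⟨a, b, hab⟩ := Nat.eq_sq_add_sq_of_isSquare_mod_neg_one (ZMod.isSquare_neg_one_of_dvd hu hN)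
  exact ⟨a, b, by exact_mod_cast hab⟩

lemma eq_one_of_dvd_sq_add_one_of_mul_sq_eq {u k n : ℤ} (hu0 : 0 ≤ u) (hu : u ∣ n ^ 2 + 1)
    (h : (k * u) ^ 2 = n ^ 2) : u = 1 := by
  have hun : u ∣ n := by
    rw [← dvd_abs, ← (sq_eq_sq_iff_abs_eq_abs _ _).mp h, dvd_abs]
    exact dvd_mul_left u k
  exact Int.eq_one_of_dvd_one hu0 ((Int.dvd_add_right (dvd_pow hun two_ne_zero)).mp hu)

lemma sq_sub_sq_ne_zero_of_odd {u : ℕ} (hu : Odd u) {a b : ℤ} (hab : (u : ℤ) = a ^ 2 + b ^ 2) :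
    a ^ 2 - b ^ 2 ≠ 0 := by
  intro h
  have : Even (u : ℤ) := ⟨b ^ 2, by linear_combination hab + h⟩
  exact Int.not_even_iff_odd.mpr ((Int.odd_coe_nat u).mpr hu) this

lemma exists_sq_add_sq_mul_sq_ne_of_not_prime {n : ℕ} (hn : 0 < n) (heven : Even n)
    (hp : ¬(n ^ 2 + 1).Prime) : ∃ x y : ℤ, x ^ 2 + y ^ 2 = n ^ 2 + 1 ∧ (x * y) ^ 2 ≠ n ^ 2 := by
  obtain ⟨u, v, hu, hv, huv⟩ := (Nat.not_prime_iff_exists_mul_eq (by nlinarith)).mp hp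
  have hu1 : 1 < u := by nlinarith
  have hv1 : 1 < v := by nlinarith
  have hodd : Odd u ∧ Odd v :=
    Nat.odd_mul.mp (huv ▸ (heven.pow_of_ne_zero two_ne_zero).add_one)
  obtain ⟨a, b, hab⟩ := exists_sq_add_sq_of_dvd_sq_add_one (Dvd.intro v huv)
  obtain ⟨c, d, hcd⟩ := exists_sq_add_sq_of_dvd_sq_add_one (Dvd.intro_left u huv)
  have hN : (n : ℤ) ^ 2 + 1 = u * v := by exact_mod_cast huv.symm
  by_contra! htriv
  have h₁ := htriv (a * c - b * d) (a * d + b * c) (by rw [hN, hab, hcd]; ring)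
  have h₂ := htriv (a * c + b * d) (a * d - b * c) (by rw [hN, hab, hcd]; ring)
  have hzero : 4 * (a * b * (c ^ 2 - d ^ 2)) * (c * d * (a ^ 2 - b ^ 2)) = 0 := by
    linear_combination h₁ - h₂
  have : a * b = 0 ∨ c * d = 0 := by
    simpa [sq_sub_sq_ne_zero_of_odd hodd.1 hab, sq_sub_sq_ne_zero_of_odd hodd.2 hcd] using hzero
  rcases this with h | h
  · have : (u : ℤ) = 1 := by
      refine eq_one_of_dvd_sq_add_one_of_mul_sq_eq (k := c * d) (by positivity) ⟨v, hN⟩ ?_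
      rw [hab]
      rcases mul_eq_zero.mp h with rfl | rfl <;> linear_combination h₁
    omega
  · have : (v : ℤ) = 1 := by
      refine eq_one_of_dvd_sq_add_one_of_mul_sq_eq (k := a * b) (by positivity)
        ⟨u, by rw [hN, mul_comm]⟩ ?_
      rw [hcd]
      rcases mul_eq_zero.mp h with rfl | rfl <;> linear_combination h₁
    omega

lemma even_iff_odd_of_sq_add_sq_eq {n : ℕ} (hn : Even n) {x y : ℤ}
    (hxy : x ^ 2 + y ^ 2 = n ^ 2 + 1) : Even x ↔ Odd y := by
  have : Odd (x ^ 2 + y ^ 2) := by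
    rw [hxy]; exact_mod_cast (hn.pow_of_ne_zero two_ne_zero).add_one
  rw [Int.odd_add, Int.odd_pow, ← Int.not_even_iff_odd, Int.even_pow] at this
  rw [← Int.not_even_iff_odd]
  tauto

lemma Nat.hasPronicSplit_of_sq_add_sq {n x y : ℕ} (hn : Even n) (hx : Even x) (hy : Odd y)
    (hy3 : 3 ≤ y) (hxy : x ^ 2 + y ^ 2 = n ^ 2 + 1) : HasPronicSplit n := by
  have hxn : x < n := by nlinarith
  obtain ⟨k, rfl⟩ := hn
  obtain ⟨j, rfl⟩ := hx
  obtain ⟨c, rfl⟩ := hy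
  refine ⟨k - j, k + j, by omega, by omega, by omega, c, by omega, ?_⟩
  zify [show j ≤ k by omega] at hxy ⊢
  apply mul_left_cancel₀ (four_ne_zero (α := ℤ))
  linear_combination -hxy

lemma Int.hasPronicSplit_of_sq_add_sq {n : ℕ} (hn : Even n) {x y : ℤ} (hx : Even x)
    (hxy : x ^ 2 + y ^ 2 = n ^ 2 + 1) (hne : (x * y) ^ 2 ≠ n ^ 2) : HasPronicSplit n := by
  have hy : Odd y := (even_iff_odd_of_sq_add_sq_eq hn hxy).mp hx
  have hy1 : y.natAbs ≠ 1 := by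
    intro h1
    have : y ^ 2 = 1 := by rw [← Int.natAbs_sq, h1]; norm_num
    exact hne (by linear_combination (x ^ 2 - 1) * this + hxy)
  refine Nat.hasPronicSplit_of_sq_add_sq hn (Int.natAbs_even.mpr hx) (Int.natAbs_odd.mpr hy)
    ?_ ?_
  · obtain ⟨j, hj⟩ := Int.natAbs_odd.mpr hy
    omega
  · zify
    rwa [sq_abs, sq_abs]

lemma hasPronicSplit_iff_of_even {n : ℕ} (hn : Even n) :
    HasPronicSplit n ↔ ∃ x y : ℤ, x ^ 2 + y ^ 2 = n ^ 2 + 1 ∧ (x * y) ^ 2 ≠ n ^ 2 := by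
  constructor
  · rintro ⟨a, b, -, -, hab, c, hc, h⟩
    have hab' : (a : ℤ) + b = n := by exact_mod_cast hab
    have hsum : ((b : ℤ) - a) ^ 2 + (2 * c + 1) ^ 2 = n ^ 2 + 1 := by
      linear_combination -4 * h + (a + b + n : ℤ) * hab'
    refine ⟨b - a, 2 * c + 1, hsum, fun htriv => ?_⟩
    have : (((b : ℤ) - a) ^ 2 - 1) * ((2 * c + 1) ^ 2 - 1) = 0 := by
      linear_combination htriv - hsum
    obtain ⟨k, rfl⟩ := hn
    rcases mul_eq_zero.mp this with h' | h' <;>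
      rcases sq_eq_one_iff.mp (sub_eq_zero.mp h') with h'' | h'' <;> omega
  · rintro ⟨x, y, hxy, hne⟩
    rcases Int.even_or_odd x with hx | hx
    · exact Int.hasPronicSplit_of_sq_add_sq hn hx hxy hne
    · have hyx : y ^ 2 + x ^ 2 = n ^ 2 + 1 := by linear_combination hxy
      exact Int.hasPronicSplit_of_sq_add_sq hn ((even_iff_odd_of_sq_add_sq_eq hn hyx).mpr hx) hyx
        (by rwa [mul_comm])

lemma hasPronicSplit_of_odd {n : ℕ} (hn : Odd n) (h3 : 3 ≤ n) : HasPronicSplit n := by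
  obtain ⟨k, rfl⟩ := hn
  exact ⟨k, k + 1, by omega, by omega, by omega, k, by omega, by push_cast; ring⟩

lemma not_prime_sq_add_one_of_odd {n : ℕ} (hn : Odd n) (h1 : 1 < n) : ¬(n ^ 2 + 1).Prime :=
  fun hp => by nlinarith [hp.even_iff.mp hn.pow.add_one]

theorem stmt_18 (n : ℕ) (hn : 0 < n) :
    rmt 3 2 n = 0 ↔ (n ^ 2 + 1).Prime := by
  rw [rmt_three_two_eq_zero_iff]
  rcases Nat.even_or_odd n with heven | hodd
  · rw [hasPronicSplit_iff_of_even heven, not_exists]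
    refine ⟨fun h => ?_, fun hp x => ?_⟩
    · by_contra hp
      obtain ⟨x, y, hxy⟩ := exists_sq_add_sq_mul_sq_ne_of_not_prime hn heven hp
      exact h x ⟨y, hxy⟩
    · rintro ⟨y, hxy, hne⟩
      exact hne (mul_sq_eq_of_sq_add_sq_eq_prime hp hxy)
  · obtain rfl | h3 : n = 1 ∨ 3 ≤ n := by obtain ⟨k, rfl⟩ := hodd; omega
    · refine iff_of_true ?_ (by norm_num)
      rintro ⟨a, b, ha, hab, hsum, -⟩
      omega
    · exact iff_of_false (not_not.mpr (hasPronicSplit_of_odd hodd h3))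
        (not_prime_sq_add_one_of_odd hodd (by omega))
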